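/- arXiv:1307.6487 — 4 statements merged into one kernel-verified Lean document; each statement's English description precedes it below -/
import Mathlib

section
/- Let s_i and s_j be adjacent simple transpositions in S_n. The map f^YT_{i,j}: D^YT_{i,j} → D^YT_{j,i} is a bijection whose inverse is f^YT_{j,i}; in particular f^YT_{j,i}(f^YT_{i,j}(Y)) = Y for every Y ∈ D^YT_{i,j}. -/
/-! ## Standard Young tableaux, encoded by entry positions

A filling with `n` entries is a function `p : ℕ → ℕ × ℕ` where `p k` is the
(row, column) position (0-indexed, rows increasing downwards) of the entry
numbered `k + 1`; only the values `p 0, …, p (n-1)` are relevant. -/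

/-- `p` is a standard Young tableau with `n` boxes: the positions of the
entries are distinct and every initial segment of positions forms a Young
diagram (a lower set in `ℕ × ℕ`); this is equivalent to the shape being a
Young diagram with entries strictly increasing along rows and columns. -/
def IsSYT (n : ℕ) (p : ℕ → ℕ × ℕ) : Prop :=
  Set.InjOn p (Set.Iio n) ∧
  ∀ k < n, IsLowerSet {q : ℕ × ℕ | ∃ j ≤ k, p j = q}

/-- The shape (set of boxes) of a filling with `n` entries. -/
def shapeYT (n : ℕ) (p : ℕ → ℕ × ℕ) : Set (ℕ × ℕ) :=
  p '' Set.Iio n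

/-- The τ-invariant of a filling: `i ∈ tauYT n p` encodes the simple
transposition `s_(i+1)` (indices shifted down by one throughout), and holds
when the entry indexed `i + 1` lies in a strictly lower row than the entry
indexed `i`. -/
def tauYT (n : ℕ) (p : ℕ → ℕ × ℕ) : Set ℕ :=
  {i | i + 1 < n ∧ (p i).1 < (p (i + 1)).1}

/-- Exchange the entries indexed `i` and `i + 1` (the action of the simple
transposition `s_(i+1)` on fillings). -/
def swapEntries (i : ℕ) (p : ℕ → ℕ × ℕ) : ℕ → ℕ × ℕ :=
  p ∘ Equiv.swap i (i + 1)

/-- Two simple transpositions indexed by `i` and `j` are adjacent. -/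
def Adjacent (i j : ℕ) : Prop := i = j + 1 ∨ j = i + 1

/-- `D^YT_{i,j}`: standard Young tableaux whose τ-invariant contains `i` but
not `j`. -/
def DYT (n i j : ℕ) (p : ℕ → ℕ × ℕ) : Prop :=
  IsSYT n p ∧ i ∈ tauYT n p ∧ j ∉ tauYT n p

open Classical in
/-- `f^YT_{i,j}` : the unique one of `s_i · Y`, `s_j · Y` that is a standard
tableau lying in `D^YT_{j,i}` (junk outside the intended domain). -/
noncomputable def fYT (n i j : ℕ) (p : ℕ → ℕ × ℕ) : ℕ → ℕ × ℕ :=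
  if DYT n j i (swapEntries i p) then swapEntries i p else swapEntries j p

/-- A column superstandard tableau: the columns are filled consecutively,
`1, …, c₁` down the first column, then `c₁+1, …, c₁+c₂` down the second
column, and so on. -/
def IsColSuperstandard (n : ℕ) (p : ℕ → ℕ × ℕ) : Prop :=
  IsSYT n p ∧ (0 < n → p 0 = (0, 0)) ∧
  ∀ k, k + 1 < n →
    p (k + 1) = ((p k).1 + 1, (p k).2) ∨ p (k + 1) = (0, (p k).2 + 1)

/-- Generalized τ-equivalence to order `m` on fillings. -/
def approxYT (n : ℕ) : ℕ → (ℕ → ℕ × ℕ) → (ℕ → ℕ × ℕ) → Prop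
  | 0, p, q => tauYT n p = tauYT n q
  | m + 1, p, q => approxYT n m p q ∧
      ∀ i j, Adjacent i j → i + 1 < n → j + 1 < n →
        DYT n i j p → DYT n i j q →
        approxYT n m (fYT n i j p) (fYT n i j q)

/-! ## Permutations -/

/-- The τ-invariant of a permutation of `{0, …, n-1}` (one-line notation
`x 0, x 1, …, x (n-1)`): `i ∈ tauSn x` encodes the simple transposition
`s_(i+1)`, and holds iff the value `i + 1` appears to the left of the value
`i`; equivalently `ℓ(s_(i+1) x) < ℓ(x)`. -/
def tauSn {n : ℕ} (x : Equiv.Perm (Fin n)) : Set ℕ :=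
  {i | ∃ h : i + 1 < n, x⁻¹ ⟨i + 1, h⟩ < x⁻¹ ⟨i, Nat.lt_of_succ_lt h⟩}

/-- Left multiplication by the simple transposition exchanging the values
`i` and `i + 1`. -/
def simpleMul {n : ℕ} (i : ℕ) (x : Equiv.Perm (Fin n)) : Equiv.Perm (Fin n) :=
  if h : i + 1 < n then
    Equiv.swap (⟨i, Nat.lt_of_succ_lt h⟩ : Fin n) ⟨i + 1, h⟩ * x
  else x

/-- `D^{S_n}_{i,j}`: permutations whose τ-invariant contains `i` but not `j`. -/
def DSn {n : ℕ} (i j : ℕ) (x : Equiv.Perm (Fin n)) : Prop :=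
  i ∈ tauSn x ∧ j ∉ tauSn x

open Classical in
/-- `f^{S_n}_{i,j}` : the unique one of `s_i x`, `s_j x` lying in
`D^{S_n}_{j,i}` (junk outside the intended domain). -/
noncomputable def fSn {n : ℕ} (i j : ℕ) (x : Equiv.Perm (Fin n)) : Equiv.Perm (Fin n) :=
  if DSn j i (simpleMul i x) then simpleMul i x else simpleMul j x

/-- Generalized τ-equivalence to order `m` on permutations. -/
def approxSn {n : ℕ} : ℕ → Equiv.Perm (Fin n) → Equiv.Perm (Fin n) → Prop
  | 0, x, y => tauSn x = tauSn y
  | m + 1, x, y => approxSn m x y ∧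
      ∀ i j, Adjacent i j → i + 1 < n → j + 1 < n →
        DSn i j x → DSn i j y → approxSn m (fSn i j x) (fSn i j y)

/-- `v` lies strictly between `u` and `w`. -/
def Between {n : ℕ} (u v w : Fin n) : Prop :=
  (u < v ∧ v < w) ∨ (w < v ∧ v < u)

/-- `x` and `y` are related by a dual Knuth step of type `a + 2` (with our
0-indexed values, `a`, `a+1`, `a+2` play the roles of `i-1`, `i`, `i+1`):
their one-line notations differ either by transposing the values `a+1` and
`a+2` with the value `a` appearing between them, or by transposing the
values `a` and `a+1` with the value `a+2` appearing between them. -/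
def DualKnuthStep {n : ℕ} (a : ℕ) (x y : Equiv.Perm (Fin n)) : Prop :=
  ∃ h : a + 2 < n,
    (y = simpleMul (a + 1) x ∧
      Between (x⁻¹ ⟨a + 1, Nat.lt_of_succ_lt h⟩)
        (x⁻¹ ⟨a, Nat.lt_of_succ_lt (Nat.lt_of_succ_lt h)⟩)
        (x⁻¹ ⟨a + 2, h⟩)) ∨
    (y = simpleMul a x ∧
      Between (x⁻¹ ⟨a, Nat.lt_of_succ_lt (Nat.lt_of_succ_lt h)⟩)
        (x⁻¹ ⟨a + 2, h⟩)
        (x⁻¹ ⟨a + 1, Nat.lt_of_succ_lt h⟩))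

/-! ## The Robinson–Schensted correspondence -/

/-- Schensted row-bumping: insert the value `v` into the given rows,
returning the new rows together with the index of the row where a new box
was created. -/
def bump : List (List ℕ) → ℕ → List (List ℕ) × ℕ
  | [], v => ([[v]], 0)
  | r :: rs, v =>
    match r.findIdx? (fun a => decide (v < a)) with
    | none => ((r ++ [v]) :: rs, 0)
    | some c =>
      let out := bump rs (r.getD c 0)
      ((r.set c v) :: out.1, out.2 + 1)

/-- Append the value `k` at the end of row `r` (creating a new row at the
bottom if necessary). -/
def addAt (Q : List (List ℕ)) (r k : ℕ) : List (List ℕ) :=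
  if r < Q.length then Q.set r ((Q.getD r []) ++ [k]) else Q ++ [[k]]

/-- Run the Robinson–Schensted algorithm on the one-line word of `x`,
producing the insertion and recording tableaux as lists of rows (all values
0-indexed). -/
def RSrows {n : ℕ} (x : Equiv.Perm (Fin n)) : List (List ℕ) × List (List ℕ) :=
  (List.finRange n).foldl
    (fun PQ k =>
      let out := bump PQ.1 (x k : ℕ)
      (out.1, addAt PQ.2 out.2 (k : ℕ)))
    ([], [])

/-- The (row, column) position of the value `k` in a list of rows. -/
def posIn (rows : List (List ℕ)) (k : ℕ) : ℕ × ℕ :=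
  (rows.findIdx (fun r => r.contains k),
   (rows.getD (rows.findIdx (fun r => r.contains k)) []).idxOf k)

/-- The insertion tableau `P(x)`, as a position function. -/
def Ptab {n : ℕ} (x : Equiv.Perm (Fin n)) : ℕ → ℕ × ℕ :=
  fun k => posIn (RSrows x).1 k

/-- The recording tableau `Q(x)`, as a position function. -/
def Qtab {n : ℕ} (x : Equiv.Perm (Fin n)) : ℕ → ℕ × ℕ :=
  fun k => posIn (RSrows x).2 k

/-- Generalized τ-equivalence to order `m` between a permutation and a
filling. -/
def approxMixed {n : ℕ} : ℕ → Equiv.Perm (Fin n) → (ℕ → ℕ × ℕ) → Prop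
  | 0, x, p => tauSn x = tauYT n p
  | m + 1, x, p => approxMixed m x p ∧
      ∀ i j, Adjacent i j → i + 1 < n → j + 1 < n →
        DSn i j x → DYT n i j p →
        approxMixed m (fSn i j x) (fYT n i j p)

/-- Sequences of `f^YT`-moves: `ChainDefined n L p` says the sequence of
maps given by `L` is defined on `p`, i.e. each intermediate tableau lies in
the domain of the next map. -/
def ChainDefined (n : ℕ) : List (ℕ × ℕ) → (ℕ → ℕ × ℕ) → Prop
  | [], _ => True
  | ij :: L, p =>
      Adjacent ij.1 ij.2 ∧ ij.1 + 1 < n ∧ ij.2 + 1 < n ∧ DYT n ij.1 ij.2 p ∧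
      ChainDefined n L (fYT n ij.1 ij.2 p)

/-- Apply a sequence of `f^YT`-moves. -/
noncomputable def applySeq (n : ℕ) (L : List (ℕ × ℕ)) (p : ℕ → ℕ × ℕ) : ℕ → ℕ × ℕ :=
  L.foldl (fun q ij => fYT n ij.1 ij.2 q) p

/-! Let `{i, j} = {a, a + 1}` and let `r₀, r₁, r₂` be the rows of the entries `a, a + 1, a + 2`.
Whether `s_a · Y` or `s_(a+1) · Y` has the τ-pattern of `D_{j,i}` is decided by comparing
`r₀` with `r₂`, in opposite ways for the two swaps, so at most one of them lies in `D_{j,i}` and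
`f_{i,j}` picks it. For `Y ∈ D_{i,j}` the right one is also a standard tableau: exchanging two
consecutive entries keeps a tableau standard unless the second sits weakly south-east of the
first, and in the relevant case that would leave a box between the entries `a` and `a + 2`
holding none of `a, a + 1, a + 2`. Finally `s_k` is an involution, so `s_k · (s_k · Y) = Y`
lies in `D_{i,j}` and uniqueness for `f_{j,i}` gives `f_{j,i} (f_{i,j} Y) = Y`. -/

theorem mem_tauYT {n i : ℕ} {p : ℕ → ℕ × ℕ} :
    i ∈ tauYT n p ↔ i + 1 < n ∧ (p i).1 < (p (i + 1)).1 := Iff.rfl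

section SwapEntries

variable (a : ℕ) (p : ℕ → ℕ × ℕ)

@[simp]
theorem swapEntries_apply_left : swapEntries a p a = p (a + 1) := by
  simp [swapEntries]

@[simp]
theorem swapEntries_apply_right : swapEntries a p (a + 1) = p a := by
  simp [swapEntries]

@[simp]
theorem swapEntries_apply_of_ne {k : ℕ} (h₁ : k ≠ a) (h₂ : k ≠ a + 1) :
    swapEntries a p k = p k := by
  simp [swapEntries, Equiv.swap_apply_of_ne_of_ne h₁ h₂]

@[simp]
theorem swapEntries_apply_add_two : swapEntries a p (a + 2) = p (a + 2) :=
  swapEntries_apply_of_ne a p (by omega) (by omega)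

@[simp]
theorem swapEntries_succ_apply_self : swapEntries (a + 1) p a = p a :=
  swapEntries_apply_of_ne (a + 1) p (by omega) (by omega)

@[simp]
theorem swapEntries_swapEntries : swapEntries a (swapEntries a p) = p := by
  ext1 k
  simp [swapEntries]

end SwapEntries

namespace IsSYT

variable {n : ℕ} {p : ℕ → ℕ × ℕ}

theorem not_le_of_lt (h : IsSYT n p) {k l : ℕ} (hkl : k < l) (hl : l < n) : ¬ p l ≤ p k := by
  intro hle
  obtain ⟨m, hm, hpm⟩ := h.2 k (hkl.trans hl) hle ⟨k, le_rfl, rfl⟩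
  have hml : m = l := h.1 (show m < n by omega) hl hpm
  omega

theorem exists_eq_of_le_of_le (h : IsSYT n p) {k l : ℕ} (hkl : k ≤ l) (hl : l < n) {w : ℕ × ℕ}
    (hkw : p k ≤ w) (hwl : w ≤ p l) : ∃ m, k ≤ m ∧ m ≤ l ∧ p m = w := by
  obtain ⟨m, hml, rfl⟩ := h.2 l hl hwl ⟨l, le_rfl, rfl⟩
  refine ⟨m, ?_, hml, rfl⟩
  by_contra! hmk
  exact h.not_le_of_lt hmk (by omega) hkw

theorem swapEntries (h : IsSYT n p) {a : ℕ} (ha : a + 1 < n) (hle : ¬ p a ≤ p (a + 1)) :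
    IsSYT n (swapEntries a p) := by
  have swap_le_iff {j k : ℕ} (hk : k ≠ a) : Equiv.swap a (a + 1) j ≤ k ↔ j ≤ k := by
    rw [Equiv.swap_apply_def]; split_ifs <;> omega
  refine ⟨h.1.comp (Equiv.swap a (a + 1)).injective.injOn fun j hj => ?_, fun k hk => ?_⟩
  · simp only [Set.mem_Iio, Equiv.swap_apply_def] at hj ⊢
    split_ifs <;> omega
  by_cases hka : k = a
  · subst hka
    rintro y x hxy ⟨j, hj, rfl⟩
    obtain ⟨m, hm, rfl⟩ := h.2 (k + 1) ha hxy ⟨_, (swap_le_iff (by omega)).2 (by omega), rfl⟩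
    rcases Nat.lt_trichotomy m k with hmk | hmk | hmk
    · exact ⟨m, hmk.le, swapEntries_apply_of_ne _ _ (by omega) (by omega)⟩
    · subst hmk
      rcases eq_or_ne j m with hjm | hjm
      · subst hjm
        exact (hle (by simpa using hxy)).elim
      · refine (h.not_le_of_lt (show j < m by omega) (by omega) ?_).elim
        rwa [_root_.swapEntries, Function.comp_apply,
          Equiv.swap_apply_of_ne_of_ne hjm (by omega)] at hxy
    · exact ⟨k, le_rfl, by simp [show m = k + 1 by omega]⟩
  · convert h.2 k hk using 1
    ext q
    constructor
    · rintro ⟨j, hj, rfl⟩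
      exact ⟨_, (swap_le_iff hka).2 hj, rfl⟩
    · rintro ⟨j, hj, rfl⟩
      exact ⟨_, (swap_le_iff hka).2 hj, by simp [_root_.swapEntries]⟩

theorem not_le_succ_of_fst_lt_of_fst_le (h : IsSYT n p) {a : ℕ} (ha : a + 2 < n)
    (h₀₂ : (p a).1 < (p (a + 2)).1) (h₂₁ : (p (a + 2)).1 ≤ (p (a + 1)).1) :
    ¬ p a ≤ p (a + 1) := by
  -- the box in the row of `a` and the column of `a + 2` would hold none of `a`, `a + 1`, `a + 2`
  intro hle
  have h₂₁' := h.not_le_of_lt (show a + 1 < a + 2 by omega) ha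
  rw [Prod.le_def] at hle h₂₁'
  obtain ⟨m, ham, hma, hm⟩ := h.exists_eq_of_le_of_le (w := ((p a).1, (p (a + 2)).2))
    (by omega) ha (Prod.le_def.2 ⟨le_rfl, by omega⟩) (Prod.le_def.2 ⟨h₀₂.le, le_rfl⟩)
  rcases (by omega : m = a ∨ m = a + 1 ∨ m = a + 2) with rfl | rfl | rfl <;>
    simp only [Prod.ext_iff] at hm <;> omega

theorem not_le_add_two_of_fst_le_of_fst_lt (h : IsSYT n p) {a : ℕ} (ha : a + 2 < n)
    (h₁₀ : (p (a + 1)).1 ≤ (p a).1) (h₀₂ : (p a).1 < (p (a + 2)).1) :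
    ¬ p (a + 1) ≤ p (a + 2) := by
  -- the box in the row of `a + 2` and the column of `a` would hold none of `a`, `a + 1`, `a + 2`
  intro hle
  have h₁₀' := h.not_le_of_lt (lt_add_one a) (by omega)
  rw [Prod.le_def] at hle h₁₀'
  obtain ⟨m, ham, hma, hm⟩ := h.exists_eq_of_le_of_le (w := ((p (a + 2)).1, (p a).2))
    (by omega) ha (Prod.le_def.2 ⟨h₀₂.le, le_rfl⟩) (Prod.le_def.2 ⟨le_rfl, by omega⟩)
  rcases (by omega : m = a ∨ m = a + 1 ∨ m = a + 2) with rfl | rfl | rfl <;>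
    simp only [Prod.ext_iff] at hm <;> omega

end IsSYT

theorem adjacent_comm {i j : ℕ} : Adjacent i j ↔ Adjacent j i := or_comm

section Adjacent

variable {n i j : ℕ} {p : ℕ → ℕ × ℕ}

theorem not_DYT_swapEntries_and_DYT_swapEntries (hadj : Adjacent i j) (hi : i + 1 < n) :
    ¬ (DYT n j i (swapEntries i p) ∧ DYT n j i (swapEntries j p)) := by
  rintro ⟨⟨-, hmemᵢ, -⟩, -, -, hnmemⱼ⟩
  rcases hadj with rfl | rfl <;>
    simp only [mem_tauYT, swapEntries_apply_left, swapEntries_apply_right,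
      swapEntries_apply_add_two, swapEntries_succ_apply_self, Nat.add_assoc, Nat.reduceAdd]
      at hmemᵢ hnmemⱼ <;> omega

theorem fYT_eq_swapEntries (hadj : Adjacent i j) (hi : i + 1 < n) {k : ℕ}
    (hk : k = i ∨ k = j) (h : DYT n j i (swapEntries k p)) : fYT n i j p = swapEntries k p := by
  rcases hk with rfl | rfl
  · exact if_pos h
  · exact if_neg fun h' => not_DYT_swapEntries_and_DYT_swapEntries hadj hi ⟨h', h⟩

theorem exists_swapEntries_mem_DYT (hadj : Adjacent i j) (hi : i + 1 < n) (hj : j + 1 < n)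
    (hp : DYT n i j p) : ∃ k, (k = i ∨ k = j) ∧ DYT n j i (swapEntries k p) := by
  obtain ⟨hsyt, hmem, hnmem⟩ := hp
  rcases hadj with rfl | rfl
  · simp only [mem_tauYT, Nat.add_assoc, Nat.reduceAdd] at hmem hnmem
    by_cases h₂₀ : (p (j + 2)).1 ≤ (p j).1
    · refine ⟨j, Or.inr rfl, hsyt.swapEntries hj fun hle => ?_, ?_, ?_⟩
      · rw [Prod.le_def] at hle; omega
      all_goals simp only [mem_tauYT, swapEntries_apply_left, swapEntries_apply_right,
        swapEntries_apply_add_two, Nat.add_assoc, Nat.reduceAdd]; omega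
    · refine ⟨j + 1, Or.inl rfl, hsyt.swapEntries hi ?_, ?_, ?_⟩
      · exact hsyt.not_le_add_two_of_fst_le_of_fst_lt (by omega) (by omega) (by omega)
      all_goals simp only [mem_tauYT, swapEntries_apply_left, swapEntries_apply_right,
        swapEntries_succ_apply_self, Nat.add_assoc, Nat.reduceAdd]; omega
  · simp only [mem_tauYT, Nat.add_assoc, Nat.reduceAdd] at hmem hnmem
    by_cases h₂₀ : (p (i + 2)).1 ≤ (p i).1
    · refine ⟨i + 1, Or.inr rfl, hsyt.swapEntries hj fun hle => ?_, ?_, ?_⟩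
      · simp only [Prod.le_def, Nat.add_assoc, Nat.reduceAdd] at hle; omega
      all_goals simp only [mem_tauYT, swapEntries_apply_left, swapEntries_apply_right,
        swapEntries_succ_apply_self, Nat.add_assoc, Nat.reduceAdd]; omega
    · refine ⟨i, Or.inl rfl, hsyt.swapEntries hi ?_, ?_, ?_⟩
      · exact hsyt.not_le_succ_of_fst_lt_of_fst_le (by omega) (by omega) (by omega)
      all_goals simp only [mem_tauYT, swapEntries_apply_left, swapEntries_apply_right,
        swapEntries_apply_add_two, Nat.add_assoc, Nat.reduceAdd]; omega

theorem DYT_fYT_and_fYT_fYT_eq_self (hadj : Adjacent i j) (hi : i + 1 < n) (hj : j + 1 < n)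
    (hp : DYT n i j p) : DYT n j i (fYT n i j p) ∧ fYT n j i (fYT n i j p) = p := by
  obtain ⟨k, hk, hpk⟩ := exists_swapEntries_mem_DYT hadj hi hj hp
  have hkp : DYT n i j (swapEntries k (swapEntries k p)) := by rwa [swapEntries_swapEntries]
  rw [fYT_eq_swapEntries hadj hi hk hpk]
  exact ⟨hpk, by rw [fYT_eq_swapEntries (adjacent_comm.1 hadj) hj hk.symm hkp,
    swapEntries_swapEntries]⟩

end Adjacent

/-- For adjacent simple transpositions `s_i`, `s_j` in `S_n`,
the map `f^YT_{i,j} : D^YT_{i,j} → D^YT_{j,i}` is a bijection with inverse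
`f^YT_{j,i}`; in particular `f^YT_{j,i} (f^YT_{i,j} Y) = Y` on `D^YT_{i,j}`. -/
theorem stmt1 (n i j : ℕ) (hadj : Adjacent i j) (hi : i + 1 < n) (hj : j + 1 < n) :
    (∀ p, DYT n i j p → DYT n j i (fYT n i j p)) ∧
    (∀ p, DYT n i j p → fYT n j i (fYT n i j p) = p) ∧
    (∀ p, DYT n j i p → DYT n i j (fYT n j i p)) ∧
    (∀ p, DYT n j i p → fYT n i j (fYT n j i p) = p) :=
  ⟨fun _ hp => (DYT_fYT_and_fYT_fYT_eq_self hadj hi hj hp).1,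
    fun _ hp => (DYT_fYT_and_fYT_fYT_eq_self hadj hi hj hp).2,
    fun _ hp => (DYT_fYT_and_fYT_fYT_eq_self (adjacent_comm.1 hadj) hj hi hp).1,
    fun _ hp => (DYT_fYT_and_fYT_fYT_eq_self (adjacent_comm.1 hadj) hj hi hp).2⟩
end

section
/- Let Γ be a column superstandard tableau and let Y be a standard Young tableau of the same shape as Γ. If τ(Y) = τ(Γ), then Y = Γ. -/
/-!
Order the boxes column by column, top to bottom within a column (colex order); a column
superstandard tableau `Γ` lists the boxes of its shape in increasing colex order. Suppose `Y`
agrees with `Γ` on the entries up to `k`. The box `b` of the entry `k + 1` in `Y` is not yet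
occupied, so it is colex-larger than `a = Γ(k)`, while every other box weakly above and to the
left of `b` is occupied, so it is colex-at-most `a`. This forces `b` to be the box below `a` or
the top box of the next column, and the τ-invariant tells which: exactly the dichotomy that
places `Γ(k + 1)`.
-/

def colexKey (q : ℕ × ℕ) : ℕ ×ₗ ℕ := toLex (q.2, q.1)

lemma colexKey_lt_colexKey {q q' : ℕ × ℕ} :
    colexKey q < colexKey q' ↔ q.2 < q'.2 ∨ q.2 = q'.2 ∧ q.1 < q'.1 :=
  Prod.Lex.toLex_lt_toLex

lemma colexKey_le_colexKey {q q' : ℕ × ℕ} :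
    colexKey q ≤ colexKey q' ↔ q.2 < q'.2 ∨ q.2 = q'.2 ∧ q.1 ≤ q'.1 :=
  Prod.Lex.toLex_le_toLex

def IsNextBox (a b : ℕ × ℕ) : Prop := b = (a.1 + 1, a.2) ∨ b = (0, a.2 + 1)

namespace IsNextBox

lemma colexKey_lt {a b : ℕ × ℕ} (h : IsNextBox a b) : colexKey a < colexKey b := by
  rcases h with rfl | rfl <;> simp [colexKey_lt_colexKey]

lemma of_colexKey_cover {a b : ℕ × ℕ} (hab : colexKey a < colexKey b)
    (hcover : ∀ q < b, colexKey q ≤ colexKey a) : IsNextBox a b := by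
  obtain ⟨r, c⟩ := b
  simp only [colexKey_lt_colexKey] at hab
  rcases Nat.eq_zero_or_pos r with rfl | hr
  · have hleft := hcover (0, c - 1) (Prod.mk_lt_mk_iff_right.2 (by omega))
    simp only [colexKey_le_colexKey] at hleft
    right
    simp only [Prod.mk.injEq, true_and]
    omega
  · have hup := hcover (r - 1, c) (Prod.mk_lt_mk_iff_left.2 (by omega))
    simp only [colexKey_le_colexKey] at hup
    left
    simp only [Prod.mk.injEq]
    omega

lemma eq_of_lt_fst_iff {a b b' : ℕ × ℕ} (hb : IsNextBox a b) (hb' : IsNextBox a b')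
    (h : a.1 < b.1 ↔ a.1 < b'.1) : b = b' := by
  rcases hb with rfl | rfl <;> rcases hb' with rfl | rfl <;> simp_all

end IsNextBox

section

variable {n k : ℕ} {p g : ℕ → ℕ × ℕ}

lemma IsSYT.exists_lt_eq_of_lt (hp : IsSYT n p) (hk : k < n) {q : ℕ × ℕ} (hq : q < p k) :
    ∃ j < k, p j = q := by
  obtain ⟨j, hjk, rfl⟩ := hp.2 k hk hq.le ⟨k, le_rfl, rfl⟩
  exact ⟨j, lt_of_le_of_ne hjk (by rintro rfl; exact hq.ne rfl), rfl⟩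

lemma IsSYT.apply_zero (hp : IsSYT n p) (hn : 0 < n) : p 0 = (0, 0) := by
  by_contra h
  obtain ⟨j, hj, -⟩ := hp.exists_lt_eq_of_lt hn
    (lt_of_le_of_ne (Prod.mk_le_mk.2 ⟨Nat.zero_le _, Nat.zero_le _⟩) (Ne.symm h))
  omega

lemma IsColSuperstandard.isNextBox (hg : IsColSuperstandard n g) (hk : k + 1 < n) :
    IsNextBox (g k) (g (k + 1)) :=
  hg.2.2 k hk

lemma IsColSuperstandard.strictMonoOn_colexKey (hg : IsColSuperstandard n g) :
    StrictMonoOn (colexKey ∘ g) (Set.Iio n) :=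
  strictMonoOn_of_lt_add_one Set.ordConnected_Iio fun _ _ _ hk => (hg.isNextBox hk).colexKey_lt

lemma IsColSuperstandard.isNextBox_of_forall_le_eq (hg : IsColSuperstandard n g) (hp : IsSYT n p)
    (hshape : shapeYT n p = shapeYT n g) (hk : k + 1 < n) (hagree : ∀ j ≤ k, p j = g j) :
    IsNextBox (g k) (p (k + 1)) := by
  refine IsNextBox.of_colexKey_cover ?_ fun q hq => ?_
  · obtain ⟨i, hi, hgi⟩ : p (k + 1) ∈ shapeYT n g := by
      rw [← hshape]; exact Set.mem_image_of_mem p hk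
    rw [← hgi]
    refine hg.strictMonoOn_colexKey (Set.mem_Iio.2 (by omega)) hi (lt_of_not_ge fun hik => ?_)
    have : i = k + 1 := hp.1 hi hk (by rw [hagree i hik, hgi])
    omega
  · obtain ⟨j, hj, rfl⟩ := hp.exists_lt_eq_of_lt hk hq
    rw [hagree j (by omega)]
    exact hg.strictMonoOn_colexKey.monotoneOn (Set.mem_Iio.2 (by omega)) (Set.mem_Iio.2 (by omega))
      (by omega)

end

/-- If `Γ` is column superstandard and `Y` is a standard
tableau of the same shape with `τ(Y) = τ(Γ)`, then `Y = Γ`. -/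
theorem stmt3 (n : ℕ) (g p : ℕ → ℕ × ℕ) (hg : IsColSuperstandard n g)
    (hp : IsSYT n p) (hshape : shapeYT n p = shapeYT n g)
    (htau : tauYT n p = tauYT n g) :
    ∀ k < n, p k = g k := by
  intro k
  induction k using Nat.strong_induction_on with
  | _ k ih =>
    intro hk
    cases k with
    | zero => rw [hp.apply_zero hk, hg.2.1 hk]
    | succ k =>
      have hagree : ∀ j ≤ k, p j = g j := fun j hj => ih j (by omega) (by omega)
      refine (hg.isNextBox_of_forall_le_eq hp hshape hk hagree).eq_of_lt_fst_iff
        (hg.isNextBox hk) ?_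
      simpa [tauYT, hk, hagree k le_rfl] using Set.ext_iff.1 htau k
end

section
/- Let s_i and s_j be adjacent simple transpositions in S_n and let x ∈ D^{S_n}_{i,j}. Then exactly one of the two permutations s_i x and s_j x lies in D^{S_n}_{j,i}. -/
/-! Write `k, k+1, k+2` for the values moved by `s_i` and `s_j`. Multiplying by `s_i` toggles
whether `i` is in the τ-invariant, and the membership of the other index in the τ-invariant of
`s_k x` and of `s_(k+1) x` is in both cases the single condition that `k+2` stands left of `k`
in `x`. So one product lies in `D_{j,i}` exactly when this condition holds, the other exactly
when it fails. -/

section SimpleMul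

variable {n : ℕ}

theorem mem_tauSn_iff (x : Equiv.Perm (Fin n)) {i : ℕ} (h : i + 1 < n) :
    i ∈ tauSn x ↔ x⁻¹ ⟨i + 1, h⟩ < x⁻¹ ⟨i, Nat.lt_of_succ_lt h⟩ :=
  ⟨fun ⟨_, hlt⟩ => hlt, fun hlt => ⟨h, hlt⟩⟩

theorem simpleMul_inv_apply (x : Equiv.Perm (Fin n)) {i : ℕ} (h : i + 1 < n) (v : Fin n) :
    (simpleMul i x)⁻¹ v = x⁻¹ (Equiv.swap ⟨i, Nat.lt_of_succ_lt h⟩ ⟨i + 1, h⟩ v) := by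
  simp [simpleMul, h, Equiv.Perm.mul_apply]

theorem mem_tauSn_simpleMul_self (x : Equiv.Perm (Fin n)) {i : ℕ} (h : i + 1 < n) :
    i ∈ tauSn (simpleMul i x) ↔ i ∉ tauSn x := by
  have hne : x⁻¹ ⟨i, Nat.lt_of_succ_lt h⟩ ≠ x⁻¹ ⟨i + 1, h⟩ :=
    x⁻¹.injective.ne (by simp)
  rw [mem_tauSn_iff _ h, mem_tauSn_iff _ h, simpleMul_inv_apply _ h, simpleMul_inv_apply _ h,
    Equiv.swap_apply_left, Equiv.swap_apply_right, not_lt, hne.le_iff_lt]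

theorem succ_mem_tauSn_simpleMul (x : Equiv.Perm (Fin n)) {k : ℕ} (h : k + 2 < n) :
    k + 1 ∈ tauSn (simpleMul k x) ↔ x⁻¹ ⟨k + 2, h⟩ < x⁻¹ ⟨k, by omega⟩ := by
  rw [mem_tauSn_iff _ h, simpleMul_inv_apply _ (by omega), simpleMul_inv_apply _ (by omega),
    Equiv.swap_apply_right,
    Equiv.swap_apply_of_ne_of_ne (by simp only [ne_eq, Fin.mk.injEq]; omega)
      (by simp only [ne_eq, Fin.mk.injEq]; omega)]

theorem mem_tauSn_simpleMul_succ (x : Equiv.Perm (Fin n)) {k : ℕ} (h : k + 2 < n) :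
    k ∈ tauSn (simpleMul (k + 1) x) ↔ x⁻¹ ⟨k + 2, h⟩ < x⁻¹ ⟨k, by omega⟩ := by
  rw [mem_tauSn_iff _ (by omega), simpleMul_inv_apply _ h, simpleMul_inv_apply _ h,
    Equiv.swap_apply_left,
    Equiv.swap_apply_of_ne_of_ne (by simp only [ne_eq, Fin.mk.injEq]; omega)
      (by simp only [ne_eq, Fin.mk.injEq]; omega)]

end SimpleMul

/-- For adjacent simple transpositions `s_i`, `s_j` in `S_n`
and `x ∈ D^{S_n}_{i,j}`, exactly one of `s_i x` and `s_j x` lies in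
`D^{S_n}_{j,i}`. -/
theorem stmt8 {n : ℕ} (i j : ℕ) (hadj : Adjacent i j) (hi : i + 1 < n)
    (hj : j + 1 < n) (x : Equiv.Perm (Fin n)) (hx : DSn i j x) :
    (DSn j i (simpleMul i x) ∧ ¬ DSn j i (simpleMul j x)) ∨
    (DSn j i (simpleMul j x) ∧ ¬ DSn j i (simpleMul i x)) := by
  obtain ⟨hxi, hxj⟩ := hx
  rcases hadj with rfl | rfl
  · simp only [DSn, mem_tauSn_simpleMul_self x hi, mem_tauSn_simpleMul_self x hj,
      mem_tauSn_simpleMul_succ x hi, succ_mem_tauSn_simpleMul x hi]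
    tauto
  · simp only [DSn, mem_tauSn_simpleMul_self x hi, mem_tauSn_simpleMul_self x hj,
      mem_tauSn_simpleMul_succ x hj, succ_mem_tauSn_simpleMul x hj]
    tauto
end

section
/- For every x ∈ S_n and every 1 ≤ i ≤ n−1, the simple transposition s_i belongs to τ(x) if and only if s_i belongs to τ(P(x)); that is, i+1 appears to the left of i in the one-line notation of x if and only if i+1 lies in a strictly lower row than i in the insertion tableau P(x). Hence τ(x) = τ(P(x)). -/
/-! Whether `i + 1` lies strictly below `i` in the insertion tableau is decided by which of
`i`, `i + 1` is inserted last. Inserting `i` puts it in the first row and leaves no `i + 1`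
there: if present, `i + 1` is the least entry exceeding `i`, so it is the one bumped. Inserting
`i + 1` puts it in the first row. Any other letter either leaves the row memberships of `i` and
`i + 1` alone, or bumps one of them, and then the same two facts applied to the remaining rows
show that the relation is unchanged. -/

open scoped List

def rowOf (rows : List (List ℕ)) (k : ℕ) : ℕ := rows.findIdx (fun r => r.contains k)

lemma rowOf_cons (r : List ℕ) (rs : List (List ℕ)) (k : ℕ) :
    rowOf (r :: rs) k = if k ∈ r then 0 else rowOf rs k + 1 := by
  by_cases h : k ∈ r <;> simp [rowOf, List.findIdx_cons, h]

lemma rowOf_bump_self (rows : List (List ℕ)) (v : ℕ) : rowOf (bump rows v).1 v = 0 := by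
  cases rows with
  | nil => simp [bump, rowOf_cons]
  | cons r rs =>
    cases hf : r.findIdx? (fun a => decide (v < a)) with
    | none => simp [bump, hf, rowOf_cons]
    | some c =>
      obtain ⟨hc, -⟩ := List.findIdx?_eq_some_iff_getElem.1 hf
      simp [bump, hf, rowOf_cons, List.mem_set hc v]

def SuccBelow (rows : List (List ℕ)) (i : ℕ) : Prop := rowOf rows i < rowOf rows (i + 1)

lemma succBelow_cons_iff (r : List ℕ) (rs : List (List ℕ)) (i : ℕ) :
    SuccBelow (r :: rs) i ↔ i ∈ r ∧ i + 1 ∉ r ∨ i ∉ r ∧ i + 1 ∉ r ∧ SuccBelow rs i := by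
  unfold SuccBelow
  rw [rowOf_cons, rowOf_cons]
  split_ifs <;> simp_all

section RowInsertion

variable {r : List ℕ} {v c : ℕ}

lemma findIdx?_lt_eq_some_spec (hf : r.findIdx? (fun a => decide (v < a)) = some c) :
    ∃ hc : c < r.length, v < r[c] ∧ ∀ j (hj : j < c), r[j] ≤ v := by
  obtain ⟨hc, hlt, hle⟩ := List.findIdx?_eq_some_iff_getElem.1 hf
  exact ⟨hc, by simpa using hlt, fun j hj => by simpa using hle j hj⟩

lemma getElem_le_of_findIdx?_lt_eq_some (hs : r.Pairwise (· < ·))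
    (hf : r.findIdx? (fun a => decide (v < a)) = some c) (hc : c < r.length) {k : ℕ}
    (hk : k ∈ r) (hvk : v < k) : r[c] ≤ k := by
  obtain ⟨_, -, hle⟩ := findIdx?_lt_eq_some_spec hf
  obtain ⟨j, hj, rfl⟩ := List.mem_iff_getElem.1 hk
  rcases lt_or_ge j c with hjc | hcj
  · exact absurd (hle j hjc) (not_le.2 hvk)
  · rcases hcj.lt_or_eq with hcj | rfl
    · exact (List.pairwise_iff_getElem.1 hs c j hc hj hcj).le
    · exact le_rfl

lemma pairwise_set_of_findIdx?_lt_eq_some (hs : r.Pairwise (· < ·)) (hv : v ∉ r)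
    (hf : r.findIdx? (fun a => decide (v < a)) = some c) : (r.set c v).Pairwise (· < ·) := by
  obtain ⟨hc, hvc, hle⟩ := findIdx?_lt_eq_some_spec hf
  rw [List.pairwise_iff_getElem] at hs ⊢
  intro a b ha hb hab
  simp only [List.length_set] at ha hb
  simp only [List.getElem_set]
  split_ifs with hca hcb hcb
  · omega
  · exact hvc.trans_le ((hs c b hc hb (by omega)).le)
  · have hne : r[a] ≠ v := fun h => hv (h ▸ List.getElem_mem _)
    exact lt_of_le_of_ne (hle a (by omega)) hne
  · exact hs a b ha hb hab

lemma getElem_notMem_set (hr : r.Nodup) (hc : c < r.length) (hv : v ≠ r[c]) :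
    r[c] ∉ r.set c v := by
  intro hmem
  obtain ⟨j, hj, hjc⟩ := List.mem_iff_getElem.1 hmem
  rw [List.getElem_set] at hjc
  split_ifs at hjc with hcj
  · exact hv hjc
  · exact hcj ((hr.getElem_inj_iff).1 hjc).symm

lemma mem_set_iff_of_ne {k : ℕ} (hc : c < r.length) (hkv : k ≠ v) (hkc : k ≠ r[c]) :
    k ∈ r.set c v ↔ k ∈ r := by
  refine ⟨fun h => (List.mem_or_eq_of_mem_set h).resolve_right hkv, fun h => ?_⟩
  obtain ⟨j, hj, rfl⟩ := List.mem_iff_getElem.1 h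
  have hjc : c ≠ j := by rintro rfl; exact hkc rfl
  exact List.mem_iff_getElem.2 ⟨j, by simpa using hj, by simp [hjc]⟩

end RowInsertion

lemma flatten_bump_perm (rows : List (List ℕ)) (v : ℕ) :
    (bump rows v).1.flatten ~ v :: rows.flatten := by
  induction rows generalizing v with
  | nil => simp [bump]
  | cons r rs ih =>
    cases hf : r.findIdx? (fun a => decide (v < a)) with
    | none => simp [bump, hf]
    | some c =>
      obtain ⟨hc, -⟩ := findIdx?_lt_eq_some_spec hf
      have hset : r.set c v ~ v :: (r.take c ++ r.drop (c + 1)) := by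
        rw [List.set_eq_take_append_cons_drop, if_pos hc]
        exact List.perm_middle
      have hr : r ~ r[c] :: (r.take c ++ r.drop (c + 1)) := by
        conv_lhs => rw [← List.take_append_drop c r, List.drop_eq_getElem_cons hc]
        exact List.perm_middle
      simp only [bump, hf, List.getD_eq_getElem r 0 hc, List.flatten_cons]
      calc r.set c v ++ (bump rs r[c]).1.flatten
          ~ v :: (r.take c ++ r.drop (c + 1)) ++ r[c] :: rs.flatten :=
            hset.append (ih r[c])
        _ ~ v :: (r[c] :: (r.take c ++ r.drop (c + 1)) ++ rs.flatten) := by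
            rw [List.cons_append, List.cons_append]
            exact List.perm_middle.cons v
        _ ~ v :: (r ++ rs.flatten) := ((hr.symm).append_right _).cons v

lemma pairwise_of_mem_bump {rows : List (List ℕ)} {v : ℕ}
    (hs : ∀ r ∈ rows, r.Pairwise (· < ·)) (hnd : rows.flatten.Nodup) (hv : v ∉ rows.flatten) :
    ∀ r ∈ (bump rows v).1, r.Pairwise (· < ·) := by
  induction rows generalizing v with
  | nil => simp [bump]
  | cons r rs ih =>
    rw [List.flatten_cons, List.nodup_append'] at hnd
    rw [List.flatten_cons, List.mem_append, not_or] at hv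
    have hsrs : ∀ q ∈ rs, q.Pairwise (· < ·) := fun q hq => hs q (List.mem_cons_of_mem _ hq)
    cases hf : r.findIdx? (fun a => decide (v < a)) with
    | none =>
      have hle : ∀ a ∈ r, a < v := fun a ha =>
        lt_of_le_of_ne (by simpa using List.findIdx?_eq_none_iff.1 hf a ha)
          (fun h => hv.1 (h ▸ ha))
      simp only [bump, hf, List.forall_mem_cons]
      refine ⟨List.pairwise_append.2 ⟨hs r List.mem_cons_self, List.pairwise_singleton _ _, ?_⟩,
        hsrs⟩
      simpa using hle
    | some c =>
      obtain ⟨hc, -⟩ := findIdx?_lt_eq_some_spec hf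
      simp only [bump, hf, List.getD_eq_getElem r 0 hc, List.forall_mem_cons]
      exact ⟨pairwise_set_of_findIdx?_lt_eq_some (hs r List.mem_cons_self) hv.1 hf,
        ih hsrs hnd.2.1 fun h => hnd.2.2 (List.getElem_mem hc) h⟩

lemma not_succBelow_bump_succ (rows : List (List ℕ)) (i : ℕ) :
    ¬ SuccBelow (bump rows (i + 1)).1 i := by
  rw [SuccBelow, rowOf_bump_self]
  exact Nat.not_lt_zero _

lemma succBelow_bump_self {rows : List (List ℕ)} (hs : ∀ r ∈ rows, r.Pairwise (· < ·)) (i : ℕ) :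
    SuccBelow (bump rows i).1 i := by
  cases rows with
  | nil => simp [bump, succBelow_cons_iff]
  | cons r rs =>
    have hsr := hs r List.mem_cons_self
    cases hf : r.findIdx? (fun a => decide (i < a)) with
    | none =>
      have hi1 : i + 1 ∉ r := fun h => by simpa using List.findIdx?_eq_none_iff.1 hf _ h
      simp [bump, hf, succBelow_cons_iff, hi1]
    | some c =>
      obtain ⟨hc, hic, -⟩ := findIdx?_lt_eq_some_spec hf
      have hi1 : i + 1 ∉ r.set c i := by
        intro h
        have hi1r : i + 1 ∈ r := (List.mem_or_eq_of_mem_set h).resolve_right (by omega)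
        have hrc : r[c] = i + 1 :=
          le_antisymm (getElem_le_of_findIdx?_lt_eq_some hsr hf hc hi1r (by omega)) hic
        exact getElem_notMem_set hsr.nodup hc (by omega) (hrc ▸ h)
      simp [bump, hf, succBelow_cons_iff, List.mem_set hc, hi1]

lemma succBelow_bump_iff {rows : List (List ℕ)} (hs : ∀ r ∈ rows, r.Pairwise (· < ·))
    {v i : ℕ} (hvi : v ≠ i) (hvi1 : v ≠ i + 1) :
    SuccBelow (bump rows v).1 i ↔ SuccBelow rows i := by
  induction rows generalizing v with
  | nil => simp [bump, succBelow_cons_iff, hvi.symm, hvi1.symm]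
  | cons r rs ih =>
    have hsr := hs r List.mem_cons_self
    have hsrs : ∀ q ∈ rs, q.Pairwise (· < ·) := fun q hq => hs q (List.mem_cons_of_mem _ hq)
    cases hf : r.findIdx? (fun a => decide (v < a)) with
    | none => simp [bump, hf, succBelow_cons_iff, hvi.symm, hvi1.symm]
    | some c =>
      obtain ⟨hc, hvc, -⟩ := findIdx?_lt_eq_some_spec hf
      simp only [bump, hf, List.getD_eq_getElem r 0 hc, succBelow_cons_iff]
      by_cases hci : r[c] = i
      · have hi : i ∉ r.set c v := hci ▸ getElem_notMem_set hsr.nodup hc (hci ▸ hvi)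
        have hi1 : i + 1 ∈ r.set c v ↔ i + 1 ∈ r := mem_set_iff_of_ne hc hvi1.symm (by omega)
        have hir : i ∈ r := hci ▸ List.getElem_mem hc
        simp [hi, hi1, hir, hci, succBelow_bump_self hsrs i]
      by_cases hci1 : r[c] = i + 1
      · -- `i ∈ r` would lie strictly between `v` and the bumped entry `i + 1`
        have hir : i ∉ r := fun h => by
          have := getElem_le_of_findIdx?_lt_eq_some hsr hf hc h (by omega)
          omega
        have hi : i ∉ r.set c v := fun h => hir ((mem_set_iff_of_ne hc hvi.symm (by omega)).1 h)
        have hi1 : i + 1 ∉ r.set c v := hci1 ▸ getElem_notMem_set hsr.nodup hc (hci1 ▸ hvi1)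
        have hi1r : i + 1 ∈ r := hci1 ▸ List.getElem_mem hc
        simp [hi, hi1, hir, hi1r, hci1, not_succBelow_bump_succ rs i]
      · have hi : i ∈ r.set c v ↔ i ∈ r := mem_set_iff_of_ne hc hvi.symm (Ne.symm hci)
        have hi1 : i + 1 ∈ r.set c v ↔ i + 1 ∈ r := mem_set_iff_of_ne hc hvi1.symm (Ne.symm hci1)
        rw [hi, hi1, ih hsrs hci hci1]

def insertWord (w : List ℕ) : List (List ℕ) := w.foldl (fun rows v => (bump rows v).1) []

lemma insertWord_append_singleton (w : List ℕ) (v : ℕ) :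
    insertWord (w ++ [v]) = (bump (insertWord w) v).1 :=
  List.foldl_concat _ _ _ _

lemma flatten_insertWord_perm (w : List ℕ) : (insertWord w).flatten ~ w := by
  induction w using List.reverseRecOn with
  | nil => rfl
  | append_singleton w v ih =>
    rw [insertWord_append_singleton]
    exact ((flatten_bump_perm _ v).trans (ih.cons v)).trans (List.perm_append_singleton v w).symm

lemma pairwise_of_mem_insertWord {w : List ℕ} (hw : w.Nodup) :
    ∀ r ∈ insertWord w, r.Pairwise (· < ·) := by
  induction w using List.reverseRecOn with
  | nil => simp [insertWord]
  | append_singleton w v ih =>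
    obtain ⟨hvw, hw⟩ := (List.nodup_concat w v).1 (List.concat_eq_append ▸ hw)
    have hperm := flatten_insertWord_perm w
    rw [insertWord_append_singleton]
    exact pairwise_of_mem_bump (ih hw) (hperm.nodup_iff.2 hw) (fun h => hvw (hperm.subset h))

theorem succBelow_insertWord_iff {w : List ℕ} (hw : w.Nodup) {i : ℕ} (hi : i ∈ w)
    (hi1 : i + 1 ∈ w) : SuccBelow (insertWord w) i ↔ w.idxOf (i + 1) < w.idxOf i := by
  induction w using List.reverseRecOn with
  | nil => simp at hi
  | append_singleton w v ih =>
    obtain ⟨hvw, hw⟩ := (List.nodup_concat w v).1 (List.concat_eq_append ▸ hw)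
    have hs := pairwise_of_mem_insertWord hw
    rw [insertWord_append_singleton]
    by_cases hvi : v = i
    · subst hvi
      have hi1 : v + 1 ∈ w := by simpa [List.mem_append] using hi1
      rw [List.idxOf_append_of_mem hi1, List.idxOf_append_of_notMem hvw]
      simpa [succBelow_bump_self hs v] using List.idxOf_lt_length_iff.2 hi1
    by_cases hvi1 : v = i + 1
    · subst hvi1
      have hi : i ∈ w := by simpa [List.mem_append] using hi
      rw [List.idxOf_append_of_mem hi, List.idxOf_append_of_notMem hvw]
      simpa [not_succBelow_bump_succ] using (List.idxOf_lt_length_iff.2 hi).le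
    have hi : i ∈ w := by simpa [List.mem_append, Ne.symm hvi] using hi
    have hi1 : i + 1 ∈ w := by simpa [List.mem_append, Ne.symm hvi1] using hi1
    rw [succBelow_bump_iff hs hvi hvi1, List.idxOf_append_of_mem hi,
      List.idxOf_append_of_mem hi1]
    exact ih hw hi hi1

lemma RSrows_fst {n : ℕ} (x : Equiv.Perm (Fin n)) :
    (RSrows x).1 = insertWord (List.ofFn fun k => (x k : ℕ)) := by
  rw [RSrows, insertWord, List.ofFn_eq_map, List.foldl_map]
  exact (List.foldl_hom Prod.fst fun _ _ => rfl).symm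

lemma nodup_ofFn_perm {n : ℕ} (x : Equiv.Perm (Fin n)) : (List.ofFn fun k => (x k : ℕ)).Nodup :=
  List.nodup_ofFn.2 (Fin.val_injective.comp x.injective)

lemma idxOf_ofFn_perm {n : ℕ} (x : Equiv.Perm (Fin n)) (i : ℕ) (hi : i < n) :
    (List.ofFn fun k => (x k : ℕ)).idxOf i = x⁻¹ ⟨i, hi⟩ := by
  have hlen : ((x⁻¹ ⟨i, hi⟩ : Fin n) : ℕ) < (List.ofFn fun k => (x k : ℕ)).length := by simp
  have hget : (List.ofFn fun k => (x k : ℕ))[(x⁻¹ ⟨i, hi⟩ : ℕ)] = i := by simp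
  rw [← (nodup_ofFn_perm x).idxOf_getElem _ hlen, hget]

lemma rowOf_Ptab_lt_iff {n : ℕ} (x : Equiv.Perm (Fin n)) {i : ℕ} (hi : i + 1 < n) :
    (Ptab x i).1 < (Ptab x (i + 1)).1 ↔ x⁻¹ ⟨i + 1, hi⟩ < x⁻¹ ⟨i, Nat.lt_of_succ_lt hi⟩ := by
  have hmem : ∀ k (hk : k < n), k ∈ List.ofFn fun k => (x k : ℕ) := fun k hk =>
    List.mem_ofFn.2 ⟨x⁻¹ ⟨k, hk⟩, by simp⟩
  change SuccBelow (RSrows x).1 i ↔ _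
  rw [RSrows_fst, succBelow_insertWord_iff (nodup_ofFn_perm x) (hmem i (by omega)) (hmem _ hi),
    idxOf_ofFn_perm x _ hi, idxOf_ofFn_perm x, Fin.lt_def]

/-- For every permutation `x` and every simple transposition,
`s_i ∈ τ(x)` iff `s_i ∈ τ(P(x))`; hence `τ(x) = τ(P(x))`. -/
theorem stmt14 {n : ℕ} (x : Equiv.Perm (Fin n)) :
    (∀ i, i + 1 < n → (i ∈ tauSn x ↔ i ∈ tauYT n (Ptab x))) ∧
    tauSn x = tauYT n (Ptab x) := by
  have htau : tauSn x = tauYT n (Ptab x) := by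
    ext i
    exact ⟨fun ⟨hi, hlt⟩ => ⟨hi, (rowOf_Ptab_lt_iff x hi).2 hlt⟩,
      fun ⟨hi, hlt⟩ => ⟨hi, (rowOf_Ptab_lt_iff x hi).1 hlt⟩⟩
  exact ⟨fun i _ => by rw [htau], htau⟩
end
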